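/- (Theorem, D_IPSI∘D_IBSI order.) Let ν₁ ≠ 0 and m₁ be real with (m₁−1)ν₁ = −2 (a scale-invariant and magnitude-invariant point). Define the Iso-Background dual m₂ := 4/ν₁ + 1, and then the Iso-Perturbation dual ν₂ := −2/(m₂−1). Then: (i) ν₂ = −ν₁/2; (ii) (m₂−1)ν₂ = −2, so (ν₂,m₂) is again scale-invariant and magnitude-invariant; and (iii) (m₁−1)ν₂ = 1, i.e. the point (ν₂, m₁) lies exactly on the boundary of the magnitude-invariance region. -/

import Mathlib

/-! The IBSI dual moves `(ν₁, m₁)` to the branch `(m₂ - 1) ν₁ = 4`, and the IPSI dual of `m₂`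
moves back to the branch `(m₂ - 1) ν₂ = -2`; comparing the two gives `ν₂ = -ν₁ / 2`, which turns
`(m₁ - 1) ν₁ = -2` into `(m₁ - 1) ν₂ = 1`. -/

noncomputable def ibsiDual (ν : ℝ) : ℝ := 4 / ν + 1

noncomputable def ipsiDual (m : ℝ) : ℝ := -2 / (m - 1)

lemma ibsiDual_sub_one_mul {ν : ℝ} (hν : ν ≠ 0) : (ibsiDual ν - 1) * ν = 4 := by
  unfold ibsiDual
  field_simp
  ring

lemma sub_one_mul_ipsiDual {m : ℝ} (hm : m ≠ 1) : (m - 1) * ipsiDual m = -2 := by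
  unfold ipsiDual
  field_simp [sub_ne_zero.mpr hm]

lemma ipsiDual_eq_neg_half {m ν : ℝ} (h : (m - 1) * ν = 4) : ipsiDual m = -ν / 2 := by
  have hm : m - 1 ≠ 0 := left_ne_zero_of_mul (h ▸ four_ne_zero)
  unfold ipsiDual
  field_simp
  linarith

/-- D_IPSI ∘ D_IBSI: starting from a scale- and magnitude-invariant point
    (ν₁, m₁) with (m₁−1)ν₁ = −2, the Iso-Background dual m₂ = 4/ν₁ + 1 followed by
    the Iso-Perturbation dual ν₂ = −2/(m₂−1) gives ν₂ = −ν₁/2, a new scale- and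
    magnitude-invariant point (ν₂, m₂) with (m₂−1)ν₂ = −2, and (ν₂, m₁) lies on the
    boundary of the magnitude-invariance region: (m₁−1)ν₂ = 1. -/
theorem duality_IPSI_IBSI (ν₁ m₁ : ℝ) (hν : ν₁ ≠ 0) (h : (m₁ - 1) * ν₁ = -2)
    (m₂ ν₂ : ℝ) (hm₂ : m₂ = 4 / ν₁ + 1) (hν₂ : ν₂ = -2 / (m₂ - 1)) :
    ν₂ = -ν₁ / 2 ∧ (m₂ - 1) * ν₂ = -2 ∧ (m₁ - 1) * ν₂ = 1 := by
  have hm₂_branch : (m₂ - 1) * ν₁ = 4 := hm₂ ▸ ibsiDual_sub_one_mul hν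
  have hν₂_half : ν₂ = -ν₁ / 2 := hν₂ ▸ ipsiDual_eq_neg_half hm₂_branch
  have hm₂_ne : m₂ ≠ 1 := sub_ne_zero.mp (left_ne_zero_of_mul (hm₂_branch ▸ four_ne_zero))
  refine ⟨hν₂_half, hν₂ ▸ sub_one_mul_ipsiDual hm₂_ne, ?_⟩
  rw [hν₂_half]
  linarith
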